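/- The series \sum_{k=1}^{\infty} 1/(k \binom{2k}{k}) equals L_{-3}(1), where L_{-3}(s) = \sum_{n=0}^{\infty} (1/(3n+1)^s - 1/(3n+2)^s). -/

import Mathlib

open Real MeasureTheory intervalIntegral Set Nat
open scoped Interval

/-! By the Beta integral, `1 / ((k + 1) * choose (2k + 2) (k + 1)) = ∫₀¹ x^k (1 - x)^(k + 1) dx`,
and `1 / (3n + 1) - 1 / (3n + 2) = ∫₀¹ (x^(3n) - x^(3n + 1)) dx`. Summing the geometric series
under the integral sign (all terms are nonnegative) turns the two sides into
`∫₀¹ (1 - x) / (x² - x + 1) dx` and `∫₀¹ 1 / (x² + x + 1) dx`. Both equal `π / (3√3)`: the second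
by the arctangent antiderivative, the first because the substitution `x ↦ 1 - x` makes it half of
`∫₀¹ 1 / (x² - x + 1) dx = 2π / (3√3)`. -/

theorem intervalIntegral.hasSum_integral_of_nonneg {μ : Measure ℝ} {a b : ℝ} {F : ℕ → ℝ → ℝ}
    {f : ℝ → ℝ} (hF_meas : ∀ n, AEStronglyMeasurable (F n) (μ.restrict (Ι a b)))
    (hF_nonneg : ∀ n, ∀ᵐ t ∂μ, t ∈ Ι a b → 0 ≤ F n t) (hf : IntervalIntegrable f μ a b)
    (h_lim : ∀ᵐ t ∂μ, t ∈ Ι a b → HasSum (fun n => F n t) (f t)) :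
    HasSum (fun n => ∫ t in a..b, F n t ∂μ) (∫ t in a..b, f t ∂μ) := by
  refine hasSum_integral_of_dominated_convergence F hF_meas (fun n => ?_)
    (h_lim.mono fun t ht hmem => (ht hmem).summable) ?_ h_lim
  · filter_upwards [hF_nonneg n] with t ht hmem
    rw [Real.norm_of_nonneg (ht hmem)]
  · refine hf.congr_ae ?_
    filter_upwards [(ae_restrict_iff' measurableSet_uIoc).2 h_lim] with t ht
    exact ht.tsum_eq.symm

theorem integral_pow_mul_one_sub_pow (a b : ℕ) :
    ∫ x in (0:ℝ)..1, x ^ a * (1 - x) ^ b = a ! * b ! / (a + b + 1)! := by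
  have h := Complex.Gamma_mul_Gamma_eq_betaIntegral (s := a + 1) (t := b + 1)
    (by simp; positivity) (by simp; positivity)
  have h_arg : (a + 1 : ℂ) + (b + 1) = ((a + b + 1 : ℕ) : ℂ) + 1 := by push_cast; ring
  rw [h_arg, Complex.Gamma_nat_eq_factorial, Complex.Gamma_nat_eq_factorial,
    Complex.Gamma_nat_eq_factorial, Complex.betaIntegral] at h
  simp only [add_sub_cancel_right, Complex.cpow_natCast] at h
  have h_ofReal : ((∫ x in (0:ℝ)..1, x ^ a * (1 - x) ^ b : ℝ) : ℂ)
      = ∫ x in (0:ℝ)..1, (x : ℂ) ^ a * (1 - (x : ℂ)) ^ b := by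
    rw [← intervalIntegral.integral_ofReal]
    push_cast
    rfl
  rw [eq_div_iff (by positivity)]
  exact_mod_cast ((h_ofReal ▸ h).trans (mul_comm _ _)).symm

theorem integral_pow_mul_one_sub_pow_succ (k : ℕ) :
    ∫ x in (0:ℝ)..1, x ^ k * (1 - x) ^ (k + 1)
      = 1 / ((k + 1 : ℕ) * (2 * (k + 1)).choose (k + 1)) := by
  have h := add_choose_mul_factorial_mul_factorial (k + 1) (k + 1)
  rw [← two_mul, factorial_succ k] at h
  rw [integral_pow_mul_one_sub_pow, show k + (k + 1) + 1 = 2 * (k + 1) by ring, ← h,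
    factorial_succ]
  push_cast
  field_simp

theorem integral_pow_sub_pow_succ (m : ℕ) :
    ∫ x in (0:ℝ)..1, (x ^ m - x ^ (m + 1)) = 1 / (m + 1) - 1 / (m + 2) := by
  rw [intervalIntegral.integral_sub (intervalIntegrable_pow _) (intervalIntegrable_pow _),
    integral_pow, integral_pow]
  push_cast
  ring_nf

theorem hasSum_pow_mul_one_sub_pow_succ {x : ℝ} (hx₀ : 0 ≤ x) (hx₁ : x ≤ 1) :
    HasSum (fun k => x ^ k * (1 - x) ^ (k + 1)) ((1 - x) / (x ^ 2 - x + 1)) := by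
  have hq : x ^ 2 - x + 1 = 1 - x * (1 - x) := by ring
  rw [hq, div_eq_mul_inv,
    show (fun k => x ^ k * (1 - x) ^ (k + 1)) = fun k => (1 - x) * (x * (1 - x)) ^ k from
    funext fun k => by rw [mul_pow, pow_succ]; ring]
  exact (hasSum_geometric_of_lt_one (by nlinarith) (by nlinarith)).mul_left (1 - x)

theorem hasSum_pow_three_mul_sub_pow_succ {x : ℝ} (hx₀ : 0 ≤ x) (hx₁ : x < 1) :
    HasSum (fun n => x ^ (3 * n) - x ^ (3 * n + 1)) (1 / (x ^ 2 + x + 1)) := by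
  have hq : 1 / (x ^ 2 + x + 1) = (1 - x) * (1 - x ^ 3)⁻¹ := by
    rw [show 1 - x ^ 3 = (1 - x) * (x ^ 2 + x + 1) by ring]
    field_simp [(sub_pos.2 hx₁).ne']
  rw [hq,
    show (fun n => x ^ (3 * n) - x ^ (3 * n + 1)) = fun n => (1 - x) * (x ^ 3) ^ n from
    funext fun n => by ring]
  exact (hasSum_geometric_of_lt_one (pow_nonneg hx₀ 3)
    (pow_lt_one₀ hx₀ hx₁ three_ne_zero)).mul_left (1 - x)

theorem hasDerivAt_arctan_quadratic {b c : ℝ} (h : b ^ 2 < 4 * c) (x : ℝ) :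
    HasDerivAt (fun y => 2 / √(4 * c - b ^ 2) * arctan ((2 * y + b) / √(4 * c - b ^ 2)))
      (1 / (x ^ 2 + b * x + c)) x := by
  have hD : 0 < 4 * c - b ^ 2 := by linarith
  have hs := Real.sq_sqrt hD.le
  refine ((((hasDerivAt_id x).const_mul 2).add_const b).div_const _).arctan.const_mul _
    |>.congr_deriv ?_
  have hq : 0 < x ^ 2 + b * x + c := by nlinarith [sq_nonneg (2 * x + b)]
  simp only [id, mul_one, div_pow, hs]
  field_simp
  rw [hs, eq_div_iff (by nlinarith)]
  ring

theorem integral_one_div_quadratic {b c : ℝ} (h : b ^ 2 < 4 * c) (l u : ℝ) :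
    ∫ x in l..u, 1 / (x ^ 2 + b * x + c) = 2 / √(4 * c - b ^ 2)
      * (arctan ((2 * u + b) / √(4 * c - b ^ 2)) - arctan ((2 * l + b) / √(4 * c - b ^ 2))) := by
  have hq : ∀ x : ℝ, x ^ 2 + b * x + c ≠ 0 := fun x => by nlinarith [sq_nonneg (2 * x + b)]
  rw [integral_eq_sub_of_hasDerivAt (fun x _ => hasDerivAt_arctan_quadratic h x)
    (Continuous.intervalIntegrable (by fun_prop (disch := exact hq)) _ _)]
  ring

theorem integral_one_div_sq_add_self_add_one :
    ∫ x in (0:ℝ)..1, 1 / (x ^ 2 + x + 1) = π / (3 * √3) := by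
  have h := integral_one_div_quadratic (b := 1) (c := 1) (by norm_num) 0 1
  simp only [one_mul] at h
  rw [h]
  norm_num
  field_simp
  ring

theorem integral_one_div_sq_sub_self_add_one :
    ∫ x in (0:ℝ)..1, 1 / (x ^ 2 - x + 1) = 2 * π / (3 * √3) := by
  have h := integral_one_div_quadratic (b := -1) (c := 1) (by norm_num) 0 1
  simp only [neg_one_mul, ← sub_eq_add_neg] at h
  rw [h]
  norm_num [neg_div, arctan_neg]
  field_simp
  ring

theorem integral_one_sub_div_sq_sub_self_add_one :
    ∫ x in (0:ℝ)..1, (1 - x) / (x ^ 2 - x + 1) = π / (3 * √3) := by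
  have hq : ∀ x : ℝ, x ^ 2 - x + 1 ≠ 0 := fun x => by nlinarith [sq_nonneg (2 * x - 1)]
  have h_symm : ∫ x in (0:ℝ)..1, (1 - x) / (x ^ 2 - x + 1)
      = ∫ x in (0:ℝ)..1, x / (x ^ 2 - x + 1) := by
    have h := integral_comp_sub_left (a := 0) (b := 1) (fun x : ℝ => x / (x ^ 2 - x + 1)) 1
    simp only [sub_zero, sub_self] at h
    rw [← h]
    congr 1
    ext x
    ring
  have h_add : (∫ x in (0:ℝ)..1, (1 - x) / (x ^ 2 - x + 1))
      + ∫ x in (0:ℝ)..1, x / (x ^ 2 - x + 1) = ∫ x in (0:ℝ)..1, 1 / (x ^ 2 - x + 1) := by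
    rw [← integral_add (Continuous.intervalIntegrable (by fun_prop (disch := exact hq)) _ _)
      (Continuous.intervalIntegrable (by fun_prop (disch := exact hq)) _ _)]
    congr 1
    ext x
    ring
  rw [integral_one_div_sq_sub_self_add_one, ← h_symm] at h_add
  linarith [show 2 * π / (3 * √3) = 2 * (π / (3 * √3)) by ring]

theorem hasSum_one_div_succ_mul_choose :
    HasSum (fun k : ℕ => 1 / (((k + 1 : ℕ) : ℝ) * (Nat.choose (2 * (k + 1)) (k + 1) : ℝ)))
      (π / (3 * √3)) := by
  rw [← integral_one_sub_div_sq_sub_self_add_one]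
  simp_rw [← integral_pow_mul_one_sub_pow_succ]
  have hq : ∀ x : ℝ, x ^ 2 - x + 1 ≠ 0 := fun x => by nlinarith [sq_nonneg (2 * x - 1)]
  refine hasSum_integral_of_nonneg (fun k => (by fun_prop : Continuous _).aestronglyMeasurable)
    (fun k => ae_of_all _ fun x hx => ?_)
    (Continuous.intervalIntegrable (by fun_prop (disch := exact hq)) _ _)
    (ae_of_all _ fun x hx => ?_)
  all_goals rw [uIoc_of_le zero_le_one] at hx
  · exact mul_nonneg (pow_nonneg hx.1.le _) (pow_nonneg (sub_nonneg.2 hx.2) _)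
  · exact hasSum_pow_mul_one_sub_pow_succ hx.1.le hx.2

theorem hasSum_one_div_three_mul_add_one_sub_one_div_three_mul_add_two :
    HasSum (fun n : ℕ => 1 / (3 * (n : ℝ) + 1) - 1 / (3 * (n : ℝ) + 2)) (π / (3 * √3)) := by
  rw [← integral_one_div_sq_add_self_add_one]
  have h_term (n : ℕ) : 1 / (3 * (n : ℝ) + 1) - 1 / (3 * (n : ℝ) + 2)
      = ∫ x in (0:ℝ)..1, (x ^ (3 * n) - x ^ (3 * n + 1)) := by
    rw [integral_pow_sub_pow_succ]
    push_cast
    ring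
  simp_rw [h_term]
  have hq : ∀ x : ℝ, x ^ 2 + x + 1 ≠ 0 := fun x => by nlinarith [sq_nonneg (2 * x + 1)]
  refine hasSum_integral_of_nonneg (fun n => (by fun_prop : Continuous _).aestronglyMeasurable)
    (fun n => ae_of_all _ fun x hx => ?_)
    (Continuous.intervalIntegrable (by fun_prop (disch := exact hq)) _ _) ?_
  · rw [uIoc_of_le zero_le_one] at hx
    exact sub_nonneg.2 (pow_le_pow_of_le_one hx.1.le hx.2 (by omega))
  · filter_upwards [(countable_singleton (1 : ℝ)).ae_notMem volume] with x hx_ne hx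
    rw [uIoc_of_le zero_le_one] at hx
    exact hasSum_pow_three_mul_sub_pow_succ hx.1.le (lt_of_le_of_ne hx.2 hx_ne)

theorem stmt_4 :
    (∑' k : ℕ, 1 / (((k + 1 : ℕ) : ℝ) * (Nat.choose (2 * (k + 1)) (k + 1) : ℝ))) =
      ∑' n : ℕ, (1 / ((3 * (n : ℝ) + 1)) - 1 / ((3 * (n : ℝ) + 2))) := by
  rw [hasSum_one_div_succ_mul_choose.tsum_eq,
    hasSum_one_div_three_mul_add_one_sub_one_div_three_mul_add_two.tsum_eq]
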